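/- arXiv:2412.03113 — 4 statements merged into one kernel-verified Lean document; each statement's English description precedes it below -/
import Mathlib

section
/- For an integer k with 1 ≤ k ≤ n and the admissible cone Γ_k = {λ ∈ ℝ^n : σ_i(λ) > 0 for all 0 ≤ i ≤ k}, the k-th elementary symmetric function σ_k is strictly increasing on Γ_k: for any λ ∈ Γ_k and any μ ∈ ℝ^n with μ_i ≥ λ_i for all i and μ ≠ λ, we have σ_k(μ) > σ_k(λ). -/
/-!
Write `λ|i` for `λ` with its `i`-th entry removed, so that
`σ_j(λ) = σ_j(λ|i) + λ_i σ_{j-1}(λ|i)`. The key fact is that `σ_j(λ|i) > 0` for `j < k` whenever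
`λ ∈ Γ_k`. Granting it, raising one coordinate keeps `λ` in `Γ_k` and does not decrease `σ_k`, and
strictly increases it if the coordinate really grows; so we raise the coordinates of `λ` to those
of `μ` one at a time. The key fact follows by induction on `j`: if `σ_j(λ|i) > 0 ≥ σ_{j+1}(λ|i)`,
the recursion at `j + 1` and `j + 2` gives `λ_i σ_j(λ|i) > |σ_{j+1}(λ|i)|` and
`σ_{j+2}(λ|i) > λ_i |σ_{j+1}(λ|i)|`, contradicting Newton's inequality
`σ_j σ_{j+2} ≤ σ_{j+1}²`. Newton's inequality is obtained by differentiating `∏ (X + λ_r)` until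
`σ_{j+2}, σ_{j+1}, σ_j` sit in its three lowest coefficients; by Rolle's theorem the derivative
still splits over `ℝ`.
-/

/-- The k-th elementary symmetric function on ℝ^n. -/
noncomputable def esymm (n k : ℕ) (l : Fin n → ℝ) : ℝ :=
  ∑ s ∈ Finset.powersetCard k (Finset.univ : Finset (Fin n)), ∏ i ∈ s, l i

open Polynomial

namespace Multiset

variable {R : Type*} [CommSemiring R]

theorem esymm_zero (s : Multiset R) : s.esymm 0 = 1 := by
  simp [esymm, powersetCard_zero_left]

theorem esymm_cons_succ (a : R) (s : Multiset R) (k : ℕ) :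
    (a ::ₘ s).esymm (k + 1) = s.esymm (k + 1) + a * s.esymm k := by
  simp [esymm, powersetCard_cons, map_map, prod_cons, sum_map_mul_left]

theorem esymm_eq_zero_of_card_lt {s : Multiset R} {k : ℕ} (h : card s < k) : s.esymm k = 0 := by
  simp [esymm, powersetCard_eq_empty _ h]

end Multiset

namespace Polynomial

/-- The quantity `c₁² - 2 c₀ c₂` of a product `p q` is
`p₀² (q₁² - 2 q₀ q₂) + q₀² (p₁² - 2 p₀ p₂)`, so its sign is inherited from the linear factors. -/
theorem Splits.two_mul_coeff_zero_mul_coeff_two_le_sq {R : Type*} [CommRing R] [LinearOrder R]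
    [IsStrictOrderedRing R] {p : R[X]} (hp : p.Splits) :
    2 * p.coeff 0 * p.coeff 2 ≤ p.coeff 1 ^ 2 := by
  induction hp using Submonoid.closure_induction with
  | mem p hp => obtain ⟨a, rfl⟩ | ⟨a, rfl⟩ := hp <;> simp [coeff_C, coeff_X]
  | one => simp [coeff_one]
  | mul p q _ _ hp hq =>
    have h0 : (p * q).coeff 0 = p.coeff 0 * q.coeff 0 := by simp [coeff_mul]
    have h1 : (p * q).coeff 1 = p.coeff 0 * q.coeff 1 + p.coeff 1 * q.coeff 0 := by
      simp [coeff_mul, Finset.Nat.antidiagonal_succ]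
    have h2 : (p * q).coeff 2 =
        p.coeff 0 * q.coeff 2 + p.coeff 1 * q.coeff 1 + p.coeff 2 * q.coeff 0 := by
      simp [coeff_mul, Finset.Nat.antidiagonal_succ]; ring
    rw [h0, h1, h2]
    nlinarith [mul_le_mul_of_nonneg_left hp (sq_nonneg (q.coeff 0)),
      mul_le_mul_of_nonneg_left hq (sq_nonneg (p.coeff 0))]

theorem Splits.derivative {p : ℝ[X]} (hp : p.Splits) : p.derivative.Splits := by
  rw [splits_iff_card_roots] at hp ⊢
  have := card_roots_le_derivative p
  have := card_roots' p.derivative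
  have := natDegree_derivative_le p
  omega

theorem Splits.iterate_derivative {p : ℝ[X]} (hp : p.Splits) (d : ℕ) :
    (Polynomial.derivative^[d] p).Splits := by
  induction d with
  | zero => exact hp
  | succ d ih => rw [Function.iterate_succ_apply']; exact ih.derivative

end Polynomial

namespace Multiset

theorem esymm_mul_esymm_le_sq (s : Multiset ℝ) (j : ℕ) :
    s.esymm j * s.esymm (j + 2) ≤ s.esymm (j + 1) ^ 2 := by
  by_cases hcard : card s < j + 2
  · rw [esymm_eq_zero_of_card_lt hcard, mul_zero]
    exact sq_nonneg _
  obtain ⟨d, hd⟩ : ∃ d, card s = d + (j + 2) := ⟨card s - (j + 2), by omega⟩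
  set q := derivative^[d] (s.map fun r => X + C r).prod
  have hq : q.Splits := (Splits.multisetProd fun p hp => by
    obtain ⟨r, -, rfl⟩ := mem_map.1 hp; exact Splits.X_add_C r).iterate_derivative d
  have hcoeff (t : ℕ) (ht : t ≤ 2) :
      q.coeff t = (t + d).descFactorial d * s.esymm (j + 2 - t) := by
    rw [coeff_iterate_derivative, nsmul_eq_mul, prod_X_add_C_coeff _ (by omega)]
    congr 2; omega
  have hfac1 : ((1 + d).descFactorial d : ℝ) = (d + 1) * d.descFactorial d := by
    have := Nat.succ_descFactorial d d
    rw [Nat.add_sub_cancel_left, one_mul] at this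
    rw [add_comm]; exact_mod_cast this
  have hfac2 : 2 * ((2 + d).descFactorial d : ℝ) = (d + 2) * ((d + 1) * d.descFactorial d) := by
    have := Nat.succ_descFactorial (d + 1) d
    rw [show d + 1 + 1 - d = 2 by omega] at this
    rw [← hfac1, add_comm 2, add_comm 1]; exact_mod_cast this
  set D : ℝ := (d.descFactorial d : ℝ)
  have hD : 0 < D := by simp only [D, Nat.descFactorial_self]; positivity
  have key := hq.two_mul_coeff_zero_mul_coeff_two_le_sq
  rw [hcoeff 0 (by norm_num), hcoeff 1 (by norm_num), hcoeff 2 (by norm_num), hfac1] at key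
  simp only [zero_add, Nat.sub_zero, Nat.add_sub_cancel, show j + 2 - 1 = j + 1 by omega] at key
  have hscaled : (d + 1) * D ^ 2 * ((d + 2) * (s.esymm j * s.esymm (j + 2))) ≤
      (d + 1) * D ^ 2 * ((d + 1) * s.esymm (j + 1) ^ 2) := by
    linear_combination key - D * s.esymm j * s.esymm (j + 2) * hfac2
  nlinarith [le_of_mul_le_mul_left hscaled (by positivity), sq_nonneg (s.esymm (j + 1))]

theorem esymm_pos_of_esymm_cons_pos {s : Multiset ℝ} {a : ℝ} {k : ℕ}
    (h : ∀ j ≤ k, 0 < (a ::ₘ s).esymm j) {j : ℕ} (hj : j < k) : 0 < s.esymm j := by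
  induction j with
  | zero => simp [esymm_zero]
  | succ j ih =>
    have hpos := ih (by omega)
    have h1 := esymm_cons_succ a s j ▸ h (j + 1) hj.le
    have h2 := esymm_cons_succ a s (j + 1) ▸ h (j + 2) hj
    by_contra! hneg
    nlinarith [esymm_mul_esymm_le_sq s j]

end Multiset

def admissibleCone (n k : ℕ) : Set (Fin n → ℝ) := {l | ∀ j ≤ k, 0 < esymm n j l}

theorem esymm_eq_esymm_cons {n : ℕ} (j : ℕ) (l : Fin n → ℝ) (i : Fin n) :
    esymm n j l = (l i ::ₘ (Finset.univ.erase i).val.map l).esymm j := by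
  rw [esymm, ← Finset.esymm_map_val, ← Multiset.map_cons, Finset.erase_val,
    Multiset.cons_erase (Finset.mem_univ i)]

theorem esymm_update_eq_esymm_cons {n : ℕ} (j : ℕ) (l : Fin n → ℝ) (i : Fin n) (c : ℝ) :
    esymm n j (Function.update l i c) = (c ::ₘ (Finset.univ.erase i).val.map l).esymm j := by
  rw [esymm_eq_esymm_cons j _ i, Function.update_self]
  congr 2
  exact Multiset.map_congr rfl fun x (hx : x ∈ Finset.univ.erase i) =>
    Function.update_of_ne (Finset.ne_of_mem_erase hx) _ _

theorem esymm_le_esymm_update {n k : ℕ} {l : Fin n → ℝ} (hl : l ∈ admissibleCone n k)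
    {i : Fin n} {c : ℝ} (hc : l i ≤ c) {j : ℕ} (hj : j ≤ k) :
    esymm n j l ≤ esymm n j (Function.update l i c) := by
  rw [esymm_eq_esymm_cons j l i, esymm_update_eq_esymm_cons]
  rcases j with _ | j
  · rfl
  have := Multiset.esymm_pos_of_esymm_cons_pos (fun j hj => esymm_eq_esymm_cons j l i ▸ hl j hj) hj
  simp only [Multiset.esymm_cons_succ]
  gcongr

theorem esymm_lt_esymm_update {n k : ℕ} {l : Fin n → ℝ} (hl : l ∈ admissibleCone n (k + 1))
    {i : Fin n} {c : ℝ} (hc : l i < c) :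
    esymm n (k + 1) l < esymm n (k + 1) (Function.update l i c) := by
  rw [esymm_eq_esymm_cons _ l i, esymm_update_eq_esymm_cons]
  have := Multiset.esymm_pos_of_esymm_cons_pos (fun j hj => esymm_eq_esymm_cons j l i ▸ hl j hj)
    k.lt_succ_self
  simp only [Multiset.esymm_cons_succ]
  gcongr

theorem update_mem_admissibleCone {n k : ℕ} {l : Fin n → ℝ} (hl : l ∈ admissibleCone n k)
    {i : Fin n} {c : ℝ} (hc : l i ≤ c) : Function.update l i c ∈ admissibleCone n k :=
  fun j hj => (hl j hj).trans_le (esymm_le_esymm_update hl hc hj)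

theorem esymm_le_esymm_of_le {n k : ℕ} {l m : Fin n → ℝ} (hl : l ∈ admissibleCone n k)
    (hlm : l ≤ m) : esymm n k l ≤ esymm n k m := by
  suffices ∀ s : Finset (Fin n), ∀ l ∈ admissibleCone n k, l ≤ m → (∀ i ∉ s, l i = m i) →
      esymm n k l ≤ esymm n k m from
    this Finset.univ l hl hlm fun i hi => absurd (Finset.mem_univ i) hi
  intro s
  induction s using Finset.induction_on with
  | empty => intro l _ _ hlm; rw [funext fun i => hlm i (Finset.notMem_empty i)]
  | insert a s _ ih =>
    intro l hl hlm hsm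
    refine (esymm_le_esymm_update hl (hlm a) le_rfl).trans <|
      ih _ (update_mem_admissibleCone hl (hlm a)) (update_le_iff.2 ⟨le_rfl, fun j _ => hlm j⟩)
        fun i hi => ?_
    rcases eq_or_ne i a with rfl | hia
    · exact Function.update_self ..
    · rw [Function.update_of_ne hia]
      exact hsm i (by simp [hi, hia])

theorem esymm_strict_mono_on_cone_general (n k : ℕ) (hk1 : 1 ≤ k)
    (l m : Fin n → ℝ) (hl : ∀ i ≤ k, 0 < esymm n i l)
    (hm : ∀ i, l i ≤ m i) (hne : m ≠ l) :
    esymm n k l < esymm n k m := by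
  obtain ⟨k, rfl⟩ := Nat.exists_eq_add_of_le' hk1
  obtain ⟨i, hi⟩ := Function.ne_iff.1 hne
  calc esymm n (k + 1) l < esymm n (k + 1) (Function.update l i (m i)) :=
        esymm_lt_esymm_update hl ((hm i).lt_of_ne hi.symm)
    _ ≤ esymm n (k + 1) m :=
      esymm_le_esymm_of_le (update_mem_admissibleCone hl (hm i))
        (update_le_iff.2 ⟨le_rfl, fun j _ => hm j⟩)

/-- σ_k is strictly increasing on the admissible cone Γ_k. -/
theorem esymm_strict_mono_on_cone (n k : ℕ) (hk1 : 1 ≤ k) (hkn : k ≤ n)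
    (l m : Fin n → ℝ) (hl : ∀ i ≤ k, 0 < esymm n i l)
    (hm : ∀ i, l i ≤ m i) (hne : m ≠ l) :
    esymm n k l < esymm n k m :=
  esymm_strict_mono_on_cone_general n k hk1 l m hl hm hne
end

section
/- For integers m,n ≥ 0, k ≥ 0 and real p, define G_p^{m,n,k}(x,y) := (1/k!) d^k/dt^k |_{t=0} ∫_0^{x+ty} s^m (1+tp+s)^n ds. Then G_p^{m,n,k}(x,y) is a polynomial in x and y, and for any differentiable function y(x) with y(0)=0 and x > 0, d/dx [G_p^{m,n,k}(x, y(x))] = x^m (1+x)^n · σ_k(y/x, …, y/x, (p+y)/(1+x), …, (p+y)/(1+x), y'), where y/x appears m times and (p+y)/(1+x) appears n times, and σ_k is the k-th elementary symmetric function on ℝ^{m+n+1}. -/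
/-- The Fang–Lai polynomial G_p^{m,n,k}(x,y), defined as the k-th Taylor
coefficient in t at t = 0 of ∫_0^{x+ty} s^m (1+tp+s)^n ds. -/
noncomputable def G (m n k : ℕ) (p x y : ℝ) : ℝ :=
  iteratedDeriv k (fun t => ∫ s in (0:ℝ)..(x + t * y), s ^ m * (1 + t * p + s) ^ n) 0
    / (Nat.factorial k : ℝ)

open Polynomial Finset

/-- Mathlib puts no topology on `ℝ[X]`, so curves of polynomials are differentiated
coefficientwise. -/
def HasCoeffwiseDerivAt (P : ℝ → ℝ[X]) (P' : ℝ[X]) (x : ℝ) : Prop :=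
  ∀ k, HasDerivAt (fun x => (P x).coeff k) (P'.coeff k) x

namespace HasCoeffwiseDerivAt

variable {P Q : ℝ → ℝ[X]} {P' Q' : ℝ[X]} {x : ℝ}

theorem const (R : ℝ[X]) (x : ℝ) : HasCoeffwiseDerivAt (fun _ => R) 0 x :=
  fun k => by simpa using hasDerivAt_const x (R.coeff k)

theorem C {f : ℝ → ℝ} {f' : ℝ} (hf : HasDerivAt f f' x) :
    HasCoeffwiseDerivAt (fun x => C (f x)) (C f') x := by
  intro k
  rcases k with _ | k
  · simpa using hf
  · simpa [coeff_C] using hasDerivAt_const x (0 : ℝ)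

theorem add (hP : HasCoeffwiseDerivAt P P' x) (hQ : HasCoeffwiseDerivAt Q Q' x) :
    HasCoeffwiseDerivAt (fun x => P x + Q x) (P' + Q') x :=
  fun k => by simpa only [coeff_add] using (hP k).fun_add (hQ k)

theorem mul (hP : HasCoeffwiseDerivAt P P' x) (hQ : HasCoeffwiseDerivAt Q Q' x) :
    HasCoeffwiseDerivAt (fun x => P x * Q x) (P' * Q x + P x * Q') x := by
  intro k
  simp only [coeff_add, coeff_mul, ← sum_add_distrib]
  exact HasDerivAt.fun_sum fun ij _ => (hP ij.1).mul (hQ ij.2)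

theorem pow (hP : HasCoeffwiseDerivAt P P' x) (N : ℕ) :
    HasCoeffwiseDerivAt (fun x => P x ^ N) (N * P x ^ (N - 1) * P') x := by
  induction N with
  | zero => simpa using const 1 x
  | succ N ih =>
    convert ih.mul hP using 1
    · simp only [pow_succ]
    · rcases N with _ | N
      · simp
      · simp only [Nat.add_sub_cancel, pow_succ]
        push_cast
        ring

theorem const_smul (hP : HasCoeffwiseDerivAt P P' x) (r : ℝ) :
    HasCoeffwiseDerivAt (fun x => r • P x) (r • P') x :=
  fun k => by simpa only [coeff_smul, smul_eq_mul] using (hP k).const_mul r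

theorem sum {ι : Type*} (s : Finset ι) {P : ι → ℝ → ℝ[X]} {P' : ι → ℝ[X]}
    (h : ∀ i ∈ s, HasCoeffwiseDerivAt (P i) (P' i) x) :
    HasCoeffwiseDerivAt (fun x => ∑ i ∈ s, P i x) (∑ i ∈ s, P' i) x :=
  fun k => by simpa only [finsetSum_coeff] using HasDerivAt.fun_sum fun i hi => h i hi k

end HasCoeffwiseDerivAt

theorem iteratedDeriv_eval (P : ℝ[X]) (k : ℕ) :
    iteratedDeriv k (fun t => P.eval t) = fun t => (derivative^[k] P).eval t := by
  induction k generalizing P with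
  | zero => simp
  | succ k ih =>
    rw [iteratedDeriv_succ, ih, Function.iterate_succ_apply']
    funext t
    exact Polynomial.deriv _

theorem iteratedDeriv_eval_zero_div_factorial (P : ℝ[X]) (k : ℕ) :
    iteratedDeriv k (fun t => P.eval t) 0 / k.factorial = P.coeff k := by
  simp only [iteratedDeriv_eval]
  rw [← coeff_zero_eq_eval_zero, coeff_iterate_derivative, zero_add,
    Nat.descFactorial_self, nsmul_eq_mul]
  field_simp [Nat.factorial_ne_zero]

theorem integral_pow_mul_add_pow (m n : ℕ) (c u : ℝ) :
    ∫ s in (0 : ℝ)..u, s ^ m * (c + s) ^ n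
      = ∑ j ∈ range (n + 1),
          (n.choose j / (m + j + 1) : ℝ) * c ^ (n - j) * u ^ (m + j + 1) := by
  have expand : ∀ s : ℝ, s ^ m * (c + s) ^ n
      = ∑ j ∈ range (n + 1), (n.choose j * c ^ (n - j)) * s ^ (m + j) := fun s => by
    rw [add_comm, add_pow, mul_sum]
    refine sum_congr rfl fun j _ => by ring
  simp_rw [expand]
  rw [intervalIntegral.integral_finsetSum fun j _ =>
    (by fun_prop : Continuous _).intervalIntegrable _ _]
  refine sum_congr rfl fun j _ => ?_
  rw [intervalIntegral.integral_const_mul, integral_pow]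
  field_simp
  simp

/-- `∫_0^{a+bt} s^m (1+pt+s)^n ds` as a polynomial in `t` (see `eval_fangLaiPoly`), over any
`ℝ`-algebra so that `a, b` may be the variables of `MvPolynomial (Fin 2) ℝ`. -/
noncomputable def fangLaiPoly {A : Type*} [CommRing A] [Algebra ℝ A] (m n : ℕ) (p : ℝ)
    (a b : A) : A[X] :=
  ∑ j ∈ range (n + 1),
    (n.choose j / (m + j + 1) : ℝ) • ((1 + p • X) ^ (n - j) * (C a + C b * X) ^ (m + j + 1))

theorem map_fangLaiPoly {A B : Type*} [CommRing A] [Algebra ℝ A] [CommRing B] [Algebra ℝ B]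
    (f : A →ₐ[ℝ] B) (m n : ℕ) (p : ℝ) (a b : A) :
    (fangLaiPoly m n p a b).map f = fangLaiPoly m n p (f a) (f b) := by
  rw [← coe_mapAlgHom]
  simp only [fangLaiPoly, map_sum, map_smul, map_mul, map_pow, map_add, map_one, coe_mapAlgHom,
    map_C, map_X, AlgHom.coe_toRingHom]

theorem eval_fangLaiPoly (m n : ℕ) (p x y t : ℝ) :
    (fangLaiPoly m n p x y).eval t
      = ∫ s in (0 : ℝ)..(x + t * y), s ^ m * (1 + t * p + s) ^ n := by
  rw [integral_pow_mul_add_pow, fangLaiPoly, eval_finsetSum]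
  refine sum_congr rfl fun j _ => ?_
  simp only [eval_smul, eval_mul, eval_pow, eval_add, eval_one, eval_C, eval_X, smul_eq_mul]
  ring

theorem G_eq_coeff_fangLaiPoly (m n k : ℕ) (p x y : ℝ) :
    G m n k p x y = (fangLaiPoly m n p x y).coeff k := by
  simp only [G, ← eval_fangLaiPoly, iteratedDeriv_eval_zero_div_factorial]

theorem hasCoeffwiseDerivAt_fangLaiPoly (m n : ℕ) (p : ℝ) {y : ℝ → ℝ} {y' x : ℝ}
    (hy : HasDerivAt y y' x) :
    HasCoeffwiseDerivAt (fun x => fangLaiPoly m n p x (y x))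
      ((1 + C y' * X) * (C x + C (y x) * X) ^ m * (C (1 + x) + C (p + y x) * X) ^ n) x := by
  have hA : HasCoeffwiseDerivAt (fun x => C x + C (y x) * X) (1 + C y' * X) x := by
    convert ((HasCoeffwiseDerivAt.C (hasDerivAt_id' x)).add
      ((HasCoeffwiseDerivAt.C hy).mul (.const X x))) using 1
    simp
  unfold fangLaiPoly
  convert HasCoeffwiseDerivAt.sum (range (n + 1)) fun j _ =>
    ((HasCoeffwiseDerivAt.const ((1 + p • X) ^ (n - j)) x).mul (hA.pow (m + j + 1))).const_smul
      (n.choose j / (m + j + 1) : ℝ) using 1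
  set A := C x + C (y x) * X
  set B : ℝ[X] := 1 + p • X
  have hAB : C (1 + x) + C (p + y x) * X = A + B := by
    simp only [A, B, smul_eq_C_mul, C_add, C_1]; ring
  -- the binomial theorem undoes the expansion of `(A + B)^n` made in `fangLaiPoly`
  rw [hAB, add_pow A B n, mul_sum]
  refine sum_congr rfl fun j _ => ?_
  have hcoeff :
      C (n.choose j / (m + j + 1) : ℝ) * ((m + j + 1 : ℕ) : ℝ[X]) = n.choose j := by
    rw [← C_eq_natCast, ← C_mul, ← C_eq_natCast]
    congr 1
    field_simp
    push_cast
    ring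
  rw [smul_eq_C_mul, zero_mul, zero_add, Nat.add_sub_cancel]
  linear_combination -(1 + C y' * X) * A ^ m * A ^ j * B ^ (n - j) * hcoeff

theorem esymm_eq_coeff_prod (N k : ℕ) (l : Fin N → ℝ) :
    esymm N k l = (∏ i, (1 + C (l i) * X)).coeff k := by
  simp_rw [prod_one_add, finsetSum_coeff, prod_mul_distrib, prod_const, ← map_prod,
    coeff_C_mul_X_pow]
  rw [esymm, powersetCard_eq_filter, sum_filter, powerset_univ]
  exact sum_congr rfl fun t _ => by simp only [eq_comm]

theorem esymm_blocks_eq_coeff (m n k : ℕ) (a b c : ℝ) :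
    esymm (m + n + 1) k (fun i => if (i : ℕ) < m then a else if (i : ℕ) < m + n then b else c)
      = ((1 + C a * X) ^ m * (1 + C b * X) ^ n * (1 + C c * X)).coeff k := by
  set l := fun i : ℕ => 1 + C (if i < m then a else if i < m + n then b else c) * X
  have hfirst : ∏ i ∈ range m, l i = (1 + C a * X) ^ m := by
    rw [prod_congr rfl fun i hi => (show l i = 1 + C a * X by simp [l, mem_range.1 hi]),
      prod_const, card_range]
  have hsecond : ∏ i ∈ range n, l (m + i) = (1 + C b * X) ^ n := by
    rw [prod_congr rfl fun i hi => (show l (m + i) = 1 + C b * X by simp [l, mem_range.1 hi]),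
      prod_const, card_range]
  have hlast : l (m + n) = 1 + C c * X := by simp [l]
  rw [esymm_eq_coeff_prod, Fin.prod_univ_eq_prod_range l, prod_range_succ, prod_range_add,
    hfirst, hsecond, hlast]

theorem C_add_C_mul_X_eq_C_mul {a : ℝ} (b : ℝ) (ha : a ≠ 0) :
    C a + C b * X = C a * (1 + C (b / a) * X) := by
  rw [mul_add, mul_one, ← mul_assoc, ← C_mul, mul_div_cancel₀ b ha]

/-- G_p^{m,n,k} is a polynomial in (x,y), and along a curve (x, y(x)) with
y(0) = 0 one has (G(x,y(x)))' = x^m (1+x)^n σ_k(y/x,…,(p+y)/(1+x),…,y'). -/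
theorem G_polynomial_and_deriv (m n k : ℕ) (p : ℝ) :
    (∃ P : MvPolynomial (Fin 2) ℝ, ∀ x y : ℝ, G m n k p x y = MvPolynomial.eval ![x, y] P)
    ∧ ∀ y : ℝ → ℝ, Differentiable ℝ y → y 0 = 0 → ∀ x : ℝ, 0 < x →
        deriv (fun x => G m n k p x (y x)) x
          = x ^ m * (1 + x) ^ n *
            esymm (m + n + 1) k (fun i =>
              if (i : ℕ) < m then y x / x
              else if (i : ℕ) < m + n then (p + y x) / (1 + x)
              else deriv y x) := by
  refine ⟨⟨(fangLaiPoly m n p (MvPolynomial.X 0) (MvPolynomial.X 1)).coeff k, fun x y => ?_⟩,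
    fun y hy _ x hx => ?_⟩
  · have h :=
      map_fangLaiPoly (MvPolynomial.aeval ![x, y]) m n p (MvPolynomial.X 0) (MvPolynomial.X 1)
    simp only [MvPolynomial.aeval_X, Matrix.cons_val_zero, Matrix.cons_val_one] at h
    rw [G_eq_coeff_fangLaiPoly, ← h, coeff_map]
    rfl
  · have hG : (fun x => G m n k p x (y x)) = fun x => (fangLaiPoly m n p x (y x)).coeff k :=
      funext fun x => G_eq_coeff_fangLaiPoly m n k p x (y x)
    rw [hG, ((hasCoeffwiseDerivAt_fangLaiPoly m n p (hy x).hasDerivAt) k).deriv,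
      esymm_blocks_eq_coeff,
      C_add_C_mul_X_eq_C_mul _ hx.ne', C_add_C_mul_X_eq_C_mul _ (by positivity : 1 + x ≠ 0),
      ← coeff_C_mul]
    congr 1
    rw [mul_pow, mul_pow, C_mul, C_pow, C_pow]
    ring
end

section
/- Let b > 0 and μ ∈ ℝ, and consider the linear ODE y' + ((m−k+1)/x + n/(1+x)) y + np/(1+x) − μ δ = 0 on (0,ε) with boundary condition y(0) = 0, where m−k+1 ≥ 1, n ≥ 0, p ∈ ℝ are given and δ ∈ {0,1}. Then there exist ε > 0 and a solution y ∈ C^∞([0,ε)) of this problem. -/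
open Polynomial

noncomputable def intPoly (a : ℕ) (r : ℝ[X]) : ℝ[X] :=
  r.sum fun j c => C (c / ((a : ℝ) + 1 + j)) * X ^ j

lemma intPoly_coeff (a : ℕ) (r : ℝ[X]) (k : ℕ) :
    (intPoly a r).coeff k = r.coeff k / ((a : ℝ) + 1 + k) := by
  unfold intPoly
  rw [Polynomial.sum_def, finset_sum_coeff]
  simp only [coeff_C_mul, coeff_X_pow, mul_ite, mul_one, mul_zero]
  rw [Finset.sum_eq_single k]
  · simp
  · intro j hj hne; simp [Ne.symm hne]
  · intro h; simp [Polynomial.notMem_support_iff.mp h]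

lemma intPoly_key (a : ℕ) (r : ℝ[X]) :
    C ((a : ℝ) + 1) * intPoly a r + X * (intPoly a r).derivative = r := by
  ext k
  have h : ((a : ℝ) + 1 + k) ≠ 0 := by positivity
  cases k with
  | zero =>
      rw [coeff_add, coeff_C_mul, mul_coeff_zero, coeff_X_zero, intPoly_coeff]
      push_cast at h ⊢
      field_simp
      ring
  | succ k =>
      rw [coeff_add, coeff_C_mul, coeff_X_mul, coeff_derivative, intPoly_coeff]
      push_cast at h ⊢
      field_simp

lemma contDiff_polyeval (p : ℝ[X]) : ContDiff ℝ (⊤ : ℕ∞) fun x : ℝ => p.eval x := by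
  induction p using Polynomial.induction_on' with
  | add p q hp hq => simpa [Polynomial.eval_add] using hp.add hq
  | monomial n c =>
      simpa [Polynomial.eval_monomial] using (contDiff_const (c := c)).mul (contDiff_id.pow n)

/-- Solvability of the singular linear ODE
y' + (a/x + n/(1+x)) y + np/(1+x) − μδ = 0, y(0) = 0, near x = 0,
where a = m−k+1 ≥ 1 and δ ∈ {0,1}. -/
theorem singular_linear_ode_solvable (a n : ℕ) (ha : 1 ≤ a) (p μ δ b : ℝ)
    (hδ : δ = 0 ∨ δ = 1) (hb : 0 < b) :
    ∃ ε > 0, ∃ y : ℝ → ℝ, ContDiffOn ℝ (⊤ : ℕ∞) y (Set.Ico 0 ε) ∧ y 0 = 0 ∧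
      ∀ x ∈ Set.Ioo (0:ℝ) ε,
        deriv y x + ((a : ℝ)/x + (n : ℝ)/(1+x)) * y x + (n : ℝ)*p/(1+x) - μ*δ = 0 := by
  classical
  set r : ℝ[X] := C (μ*δ) * (1+X)^n - C ((n:ℝ)*p) * (1+X)^(n-1) with hr
  set S : ℝ[X] := intPoly a r with hS
  refine ⟨1, one_pos, fun x => x * S.eval x / (1+x)^n, ?_, by simp, ?_⟩
  · apply ContDiffOn.div
    · exact (contDiff_id.mul (contDiff_polyeval S)).contDiffOn
    · exact ((contDiff_const.add contDiff_id).pow n).contDiffOn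
    · intro x hx
      have : (0:ℝ) < 1 + x := by nlinarith [hx.1]
      positivity
  · intro x hx
    obtain ⟨hx0, hx1⟩ := hx
    have h1x : (0:ℝ) < 1 + x := by linarith
    have hne : (1+x) ≠ 0 := ne_of_gt h1x
    have hgne : ((1:ℝ)+x)^n ≠ 0 := pow_ne_zero _ hne
    -- derivative computation
    have hf : HasDerivAt (fun x : ℝ => x * S.eval x)
        (1 * S.eval x + x * S.derivative.eval x) x :=
      (hasDerivAt_id x).mul (S.hasDerivAt x)
    have hg : HasDerivAt (fun x : ℝ => (1+x)^n)
        ((n : ℝ) * (1+x)^(n-1) * 1) x := by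
      exact ((hasDerivAt_id x).const_add 1).pow n
    have hy : HasDerivAt (fun x : ℝ => x * S.eval x / (1+x)^n)
        (((1 * S.eval x + x * S.derivative.eval x) * (1+x)^n -
          x * S.eval x * ((n : ℝ) * (1+x)^(n-1) * 1)) / ((1+x)^n)^2) x := hf.div hg hgne
    rw [hy.deriv]
    -- key polynomial identity evaluated at x
    have hkey : ((a : ℝ) + 1) * S.eval x + x * S.derivative.eval x = r.eval x := by
      have := congrArg (Polynomial.eval x) (intPoly_key a r)
      simpa [hS] using this
    have hreval : r.eval x = μ*δ*(1+x)^n - (n:ℝ)*p*(1+x)^(n-1) := by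
      simp [hr]
    rw [hreval] at hkey
    rcases Nat.eq_zero_or_pos n with hn | hn
    · subst hn
      simp only [Nat.cast_zero, pow_zero] at *
      field_simp
      linear_combination (1 + x) * hkey
    · obtain ⟨m, rfl⟩ : ∃ m, n = m + 1 := ⟨n-1, (Nat.succ_pred_eq_of_pos hn).symm⟩
      simp only [Nat.add_sub_cancel, pow_succ] at hkey ⊢
      have hqne : ((1:ℝ)+x)^m ≠ 0 := pow_ne_zero _ hne
      field_simp
      push_cast at hkey ⊢
      linear_combination (1 + x) * hkey
end

section
/- Let p > 0 and let ν = (p, p, …, p) ∈ ℝ^n. For integers 0 ≤ i−1 < k−m−1 ≤ n, let c := (σ_{k−m}(ν̂) − μσ_{ℓ−m}(ν̂))/(σ_{k−m−1}(ν̂) − μσ_{ℓ−m−1}(ν̂)) where ν̂ = ν and the denominator is assumed positive. If μ > 0 and ℓ < k, then c < σ_i(ν)/σ_{i−1}(ν) for all 1 ≤ i ≤ k−m−1; consequently σ_i(ν) − c·σ_{i−1}(ν) > 0 for all such i. -/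
lemma esymm_const (n r : ℕ) (p : ℝ) (ν : Fin n → ℝ) (hν : ∀ i, ν i = p) :
    esymm n r ν = (n.choose r : ℝ) * p ^ r := by
  unfold esymm
  have h : ∀ s ∈ Finset.powersetCard r (Finset.univ : Finset (Fin n)),
      ∏ i ∈ s, ν i = p ^ r := by
    intro s hs
    rw [Finset.mem_powersetCard] at hs
    calc ∏ i ∈ s, ν i = ∏ _i ∈ s, p := Finset.prod_congr rfl (fun i _ => hν i)
    _ = p ^ s.card := Finset.prod_const p
    _ = p ^ r := by rw [hs.2]
  rw [Finset.sum_congr rfl h, Finset.sum_const, Finset.card_powersetCard,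
    Finset.card_univ, Fintype.card_fin, nsmul_eq_mul]

lemma crossR (n : ℕ) (p : ℝ) (hp : 0 < p) (r s : ℕ) (hr : 1 ≤ r) (hrs : r < s)
    (hs : s ≤ n + 1) :
    (n.choose s : ℝ) * p ^ s * ((n.choose (r-1) : ℝ) * p ^ (r-1)) <
      (n.choose r : ℝ) * p ^ r * ((n.choose (s-1) : ℝ) * p ^ (s-1)) := by
  have hpow : p ^ s * p ^ (r-1) = p ^ r * p ^ (s-1) := by
    rw [← pow_add, ← pow_add]; congr 1; omega
  have hchoose : (n.choose s : ℝ) * (n.choose (r-1) : ℝ) <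
      (n.choose r : ℝ) * (n.choose (s-1) : ℝ) := by
    rcases Nat.lt_or_ge s (n+1) with hsn | hsn
    · -- s ≤ n, use the ratio identities
      have hsn' : s ≤ n := by omega
      have e1 : n.choose s * s = n.choose (s-1) * (n + 1 - s) := by
        have h := Nat.choose_succ_right_eq n (s-1)
        have hss : s - 1 + 1 = s := by omega
        rw [hss] at h
        rw [h]; congr 1; omega
      have e2 : n.choose r * r = n.choose (r-1) * (n + 1 - r) := by
        have h := Nat.choose_succ_right_eq n (r-1)
        have hrr : r - 1 + 1 = r := by omega
        rw [hrr] at h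
        rw [h]; congr 1; omega
      have e1R : (n.choose s : ℝ) * s = (n.choose (s-1) : ℝ) * ((n:ℝ) + 1 - s) := by
        have h := congrArg (fun t : ℕ => (t : ℝ)) e1
        push_cast [Nat.cast_sub (show s ≤ n + 1 by omega)] at h
        linarith [h]
      have e2R : (n.choose r : ℝ) * r = (n.choose (r-1) : ℝ) * ((n:ℝ) + 1 - r) := by
        have h := congrArg (fun t : ℕ => (t : ℝ)) e2
        push_cast [Nat.cast_sub (show r ≤ n + 1 by omega)] at h
        linarith [h]
      have c1 : (0:ℝ) < (n.choose (s-1) : ℝ) := by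
        exact_mod_cast Nat.choose_pos (show s - 1 ≤ n by omega)
      have c2 : (0:ℝ) < (n.choose (r-1) : ℝ) := by
        exact_mod_cast Nat.choose_pos (show r - 1 ≤ n by omega)
      have hrR : (1:ℝ) ≤ (r:ℝ) := by exact_mod_cast hr
      have hrsR : (r:ℝ) < (s:ℝ) := by exact_mod_cast hrs
      have hsR : (s:ℝ) ≤ (n:ℝ) := by exact_mod_cast hsn'
      have keyR : ((n:ℝ) + 1 - s) * r < ((n:ℝ) + 1 - r) * s := by nlinarith
      have hrspos : (0:ℝ) < (r:ℝ) * s := by nlinarith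
      have main : (n.choose s : ℝ) * (n.choose (r-1) : ℝ) * ((r:ℝ) * s) <
          (n.choose r : ℝ) * (n.choose (s-1) : ℝ) * ((r:ℝ) * s) := by
        calc (n.choose s : ℝ) * (n.choose (r-1) : ℝ) * ((r:ℝ) * s)
            = ((n.choose s : ℝ) * s) * ((n.choose (r-1) : ℝ) * r) := by ring
          _ = ((n.choose (s-1) : ℝ) * ((n:ℝ) + 1 - s)) * ((n.choose (r-1) : ℝ) * r) := by
              rw [e1R]
          _ = ((n.choose (s-1) : ℝ) * (n.choose (r-1) : ℝ)) * (((n:ℝ) + 1 - s) * r) := by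
              ring
          _ < ((n.choose (s-1) : ℝ) * (n.choose (r-1) : ℝ)) * (((n:ℝ) + 1 - r) * s) := by
              exact mul_lt_mul_of_pos_left keyR (mul_pos c1 c2)
          _ = ((n.choose (r-1) : ℝ) * ((n:ℝ) + 1 - r)) * ((n.choose (s-1) : ℝ) * s) := by
              ring
          _ = ((n.choose r : ℝ) * r) * ((n.choose (s-1) : ℝ) * s) := by rw [e2R]
          _ = (n.choose r : ℝ) * (n.choose (s-1) : ℝ) * ((r:ℝ) * s) := by ring
      exact lt_of_mul_lt_mul_right main (le_of_lt hrspos)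
    · -- s = n+1, LHS is 0
      have hs1 : s = n + 1 := by omega
      have h0 : n.choose s = 0 := by rw [hs1]; exact Nat.choose_succ_self n
      rw [h0]
      have c1 : (0:ℝ) < (n.choose (s-1) : ℝ) := by
        exact_mod_cast Nat.choose_pos (show s - 1 ≤ n by omega)
      have c2 : (0:ℝ) < (n.choose r : ℝ) := by
        exact_mod_cast Nat.choose_pos (show r ≤ n by omega)
      simpa using mul_pos c2 c1
  calc (n.choose s : ℝ) * p ^ s * ((n.choose (r-1) : ℝ) * p ^ (r-1))
      = (n.choose s : ℝ) * (n.choose (r-1) : ℝ) * (p ^ s * p ^ (r-1)) := by ring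
    _ < (n.choose r : ℝ) * (n.choose (s-1) : ℝ) * (p ^ s * p ^ (r-1)) := by
        exact mul_lt_mul_of_pos_right hchoose (by positivity)
    _ = (n.choose r : ℝ) * p ^ r * ((n.choose (s-1) : ℝ) * p ^ (s-1)) := by
        rw [hpow]; ring

/-- For the constant vector ν = (p,…,p) with p > 0, the quotient
c = (σ_{k−m} − μσ_{ℓ−m})/(σ_{k−m−1} − μσ_{ℓ−m−1}) satisfies
c < σ_i(ν)/σ_{i−1}(ν) for all 1 ≤ i ≤ k−m−1, hence σ_i(ν) − c σ_{i−1}(ν) > 0. -/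
theorem constant_vector_ratio_chain (n k ℓ m : ℕ) (hkm : m + 2 ≤ k)
    (hkn : k - m - 1 ≤ n) (hℓk : ℓ < k)
    (μ p : ℝ) (hμ : 0 < μ) (hp : 0 < p)
    (ν : Fin n → ℝ) (hν : ∀ i, ν i = p)
    (c : ℝ)
    (hc : c = (esymm n (k-m) ν - (if m ≤ ℓ then μ * esymm n (ℓ-m) ν else 0))
        / (esymm n (k-m-1) ν - (if m + 1 ≤ ℓ then μ * esymm n (ℓ-m-1) ν else 0)))
    (hden : 0 < esymm n (k-m-1) ν - (if m + 1 ≤ ℓ then μ * esymm n (ℓ-m-1) ν else 0)) :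
    ∀ i, 1 ≤ i → i ≤ k - m - 1 →
      c < esymm n i ν / esymm n (i-1) ν ∧ 0 < esymm n i ν - c * esymm n (i-1) ν := by
  have hE : ∀ r, esymm n r ν = (n.choose r : ℝ) * p ^ r :=
    fun r => esymm_const n r p ν hν
  intro i hi1 hi2
  simp only [hE] at hc hden ⊢
  have hq2 : 2 ≤ k - m := by omega
  have hqn : k - m ≤ n + 1 := by omega
  have posq1 : (0:ℝ) < (n.choose (k-m-1) : ℝ) * p ^ (k-m-1) := by
    have : 0 < n.choose (k-m-1) := Nat.choose_pos (by omega)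
    positivity
  have posi1 : (0:ℝ) < (n.choose (i-1) : ℝ) * p ^ (i-1) := by
    have : 0 < n.choose (i-1) := Nat.choose_pos (by omega)
    positivity
  -- step 2 : strict ratio monotonicity σ_{k-m}/σ_{k-m-1} < σ_i/σ_{i-1}
  have step2 : (n.choose (k-m) : ℝ) * p ^ (k-m) / ((n.choose (k-m-1) : ℝ) * p ^ (k-m-1))
      < (n.choose i : ℝ) * p ^ i / ((n.choose (i-1) : ℝ) * p ^ (i-1)) := by
    rw [div_lt_div_iff₀ posq1 posi1]
    exact crossR n p hp i (k-m) hi1 (by omega) hqn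
  -- step 1 : c ≤ σ_{k-m}/σ_{k-m-1}
  have step1 : c ≤ (n.choose (k-m) : ℝ) * p ^ (k-m) / ((n.choose (k-m-1) : ℝ) * p ^ (k-m-1)) := by
    rw [hc, div_le_div_iff₀ hden posq1]
    by_cases h1 : m + 1 ≤ ℓ
    · simp only [if_pos h1, if_pos (show m ≤ ℓ by omega)]
      have hu1 : 1 ≤ ℓ - m := by omega
      have huq : ℓ - m < k - m := by omega
      have hcr := crossR n p hp (ℓ-m) (k-m) hu1 huq hqn
      nlinarith [mul_lt_mul_of_pos_left hcr hμ]
    · by_cases h0 : m ≤ ℓ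
      · simp only [if_pos h0, if_neg h1]
        have hu0 : ℓ - m = 0 := by omega
        rw [hu0]
        simp only [Nat.choose_zero_right, Nat.cast_one, pow_zero, mul_one]
        nlinarith
      · simp only [if_neg h0, if_neg h1, sub_zero]
        ring_nf
        exact le_refl _
  have hci : c < (n.choose i : ℝ) * p ^ i / ((n.choose (i-1) : ℝ) * p ^ (i-1)) :=
    lt_of_le_of_lt step1 step2
  refine ⟨hci, ?_⟩
  have := (lt_div_iff₀ posi1).mp hci
  linarith
end
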